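/- If A and B are subgroups of ℚ and φ : A → B, ψ : B → A are homomorphisms with ψ ∘ φ = n·1_A for some nonzero integer n, then A and B are isomorphic as abelian groups. -/

import Mathlib

/-!
A nonzero homomorphism out of a subgroup of `ℚ` is injective, so `ψ` identifies `B` with a
subgroup `C` of `A` containing `n • A`. Any two elements of a subgroup of `ℚ` are integer
multiples of a common element of it; hence `A / p • A` has at most `p` elements, and a subgroup
squeezed between `p • A` and `A` is one of the two. Splitting off the prime factors of `n` one at
a time gives `C = d • A` for a rational `d ≠ 0`, and `B ≅ C ≅ A`.
-/

open scoped Pointwise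

namespace AddSubgroup

theorem exists_mem_zsmul_eq_and_zsmul_eq {A : AddSubgroup ℚ} {x y : ℚ} (hx : x ∈ A)
    (hy : y ∈ A) : ∃ g ∈ A, ∃ s t : ℤ, s • g = x ∧ t • g = y := by
  rcases eq_or_ne x 0 with rfl | hx0
  · exact ⟨y, hy, 0, 1, zero_smul _ _, one_smul _ _⟩
  set q := y / x
  have hqx : q * x = y := div_mul_cancel₀ y hx0
  have hq : (q.den : ℚ) * y = q.num * x := by
    rw [← Rat.mul_den_eq_num, mul_right_comm, hqx, mul_comm]
  obtain ⟨u, v, huv⟩ : IsCoprime q.num q.den := Int.isCoprime_iff_gcd_eq_one.mpr q.reduced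
  have huv' : (u : ℚ) * q.num + v * q.den = 1 := by exact_mod_cast huv
  refine ⟨u • y + v • x, A.add_mem (A.zsmul_mem hy u) (A.zsmul_mem hx v), q.den, q.num, ?_, ?_⟩
  · simp only [zsmul_eq_mul, Int.cast_natCast]
    linear_combination u * hq + x * huv'
  · simp only [zsmul_eq_mul]
    linear_combination y * huv' - v * hq

theorem natCast_smul_le {R M : Type*} [Semiring R] [AddCommGroup M] [Module R M]
    (S : AddSubgroup M) (n : ℕ) : (n : R) • S ≤ S := by
  intro _ hmem
  obtain ⟨x, hx, rfl⟩ := (mem_smul_pointwise_iff_exists _ _ _).mp hmem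
  rw [Nat.cast_smul_eq_nsmul]
  exact S.nsmul_mem hx n

theorem eq_or_eq_smul_of_prime_smul_le {A C : AddSubgroup ℚ} {p : ℕ} (hp : p.Prime)
    (hCA : C ≤ A) (hpC : (p : ℚ) • A ≤ C) : C = A ∨ C = (p : ℚ) • A := by
  by_cases hC : C ≤ (p : ℚ) • A
  · exact Or.inr (hC.antisymm hpC)
  obtain ⟨c, hcC, hcA⟩ := SetLike.not_le_iff_exists.mp hC
  refine Or.inl (hCA.antisymm fun x hx => ?_)
  obtain ⟨g, hg, s, t, rfl, rfl⟩ := exists_mem_zsmul_eq_and_zsmul_eq (hCA hcC) hx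
  have hps : IsCoprime (p : ℤ) s := by
    rw [(Nat.prime_iff_prime_int.mp hp).coprime_iff_not_dvd]
    rintro ⟨k, rfl⟩
    refine hcA ((mem_smul_pointwise_iff_exists _ _ _).mpr ⟨k • g, A.zsmul_mem hg k, ?_⟩)
    simp only [zsmul_eq_mul, smul_eq_mul, Int.cast_mul, Int.cast_natCast]
    ring
  obtain ⟨u, v, huv⟩ := hps
  have hgC : g ∈ C := by
    have hg_eq : g = u • ((p : ℚ) • g) + v • (s • g) := by
      simp only [zsmul_eq_mul, smul_eq_mul]
      linear_combination (-g) * (by exact_mod_cast huv : (u : ℚ) * p + v * s = 1)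
    rw [hg_eq]
    exact add_mem (zsmul_mem (hpC (smul_mem_pointwise_smul _ _ _ hg)) u) (zsmul_mem hcC v)
  exact C.zsmul_mem hgC t

theorem exists_smul_eq_of_natCast_smul_le {A C : AddSubgroup ℚ} {n : ℕ} (hn : n ≠ 0)
    (hCA : C ≤ A) (hnC : (n : ℚ) • A ≤ C) : ∃ d : ℚ, d ≠ 0 ∧ C = d • A := by
  induction n using induction_on_primes generalizing C with
  | zero => exact absurd rfl hn
  | one => exact ⟨1, one_ne_zero, by rw [one_smul]; exact hCA.antisymm (by simpa using hnC)⟩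
  | prime_mul p m hp ih =>
    obtain ⟨e, he, hD⟩ := ih (right_ne_zero_of_mul hn)
      (sup_le hCA (natCast_smul_le A m)) (le_sup_right : (m : ℚ) • A ≤ C ⊔ (m : ℚ) • A)
    have hpD : (p : ℚ) • (C ⊔ (m : ℚ) • A) ≤ C := by
      intro _ hmem
      obtain ⟨x, hx, rfl⟩ := (mem_smul_pointwise_iff_exists _ _ _).mp hmem
      obtain ⟨y, hy, _, hz, rfl⟩ := mem_sup.mp hx
      obtain ⟨a, ha, rfl⟩ := (mem_smul_pointwise_iff_exists _ _ _).mp hz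
      rw [smul_add, smul_smul, ← Nat.cast_mul]
      exact add_mem (natCast_smul_le C p (smul_mem_pointwise_smul _ _ _ hy))
        (hnC (smul_mem_pointwise_smul _ _ _ ha))
    rcases eq_or_eq_smul_of_prime_smul_le hp le_sup_left hpD with hCD | hCD
    · exact ⟨e, he, hCD.trans hD⟩
    · exact ⟨p * e, mul_ne_zero (Nat.cast_ne_zero.mpr hp.ne_zero) he, by rw [hCD, hD, smul_smul]⟩

noncomputable def equivSMul₀ {G₀ M : Type*} [GroupWithZero G₀] [AddGroup M]
    [DistribMulAction G₀ M] {a : G₀} (ha : a ≠ 0) (S : AddSubgroup M) :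
    S ≃+ (a • S : AddSubgroup M) :=
  S.equivMapOfInjective _ (MulAction.injective₀ ha)

end AddSubgroup

theorem AddMonoidHom.injective_of_ne_zero {A : AddSubgroup ℚ} {M : Type*} [AddCommGroup M]
    [IsAddTorsionFree M] (f : A →+ M) (hf : f ≠ 0) : Function.Injective f := by
  obtain ⟨a₀, ha₀⟩ : ∃ a₀, f a₀ ≠ 0 := by
    by_contra! h
    exact hf (AddMonoidHom.ext h)
  refine (injective_iff_map_eq_zero f).mpr fun a ha => ?_
  obtain ⟨g, hg, s, t, hs, ht⟩ := AddSubgroup.exists_mem_zsmul_eq_and_zsmul_eq a₀.2 a.2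
  obtain rfl : a₀ = s • ⟨g, hg⟩ := Subtype.ext hs.symm
  obtain rfl : a = t • ⟨g, hg⟩ := Subtype.ext ht.symm
  rw [map_zsmul] at ha ha₀
  have hfg : f ⟨g, hg⟩ ≠ 0 := fun h => ha₀ (by rw [h, smul_zero])
  rw [(IsAddTorsionFree.zsmul_eq_zero_iff_left hfg).mp ha, zero_smul]

theorem rank_one_nearly_iso_implies_iso_general
    (A B : AddSubgroup ℚ) (hA : A ≠ ⊥)
    (φ : A →+ B) (ψ : B →+ A) (n : ℤ) (hn : n ≠ 0)
    (h : ∀ a : A, ψ (φ a) = n • a) :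
    Nonempty (A ≃+ B) := by
  obtain ⟨a, ha⟩ := AddSubgroup.ne_bot_iff_exists_ne_zero.mp hA
  set f : B →+ ℚ := A.subtype.comp ψ
  have hf : Function.Injective f := by
    refine f.injective_of_ne_zero fun hf0 => ?_
    have hna : ((n • a : A) : ℚ) = 0 := by simpa [f, h] using DFunLike.congr_fun hf0 (φ a)
    exact ha (by simpa [hn] using hna)
  have hCA : f.range ≤ A := by
    rintro _ ⟨b, rfl⟩
    exact (ψ b).2
  have hnC : (n.natAbs : ℚ) • A ≤ f.range := by
    intro _ hmem
    obtain ⟨x, hx, rfl⟩ := (AddSubgroup.mem_smul_pointwise_iff_exists _ _ _).mp hmem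
    refine ⟨φ (n.sign • ⟨x, hx⟩), ?_⟩
    simp [f, h, smul_smul]
  obtain ⟨d, hd, hC⟩ := AddSubgroup.exists_smul_eq_of_natCast_smul_le
    (Int.natAbs_ne_zero.mpr hn) hCA hnC
  exact ⟨(AddSubgroup.equivSMul₀ hd A).trans
    ((AddEquiv.addSubgroupCongr hC.symm).trans (AddMonoidHom.ofInjective hf).symm)⟩

/-- Near isomorphism implies isomorphism for rank-one groups: if `A, B` are
nonzero subgroups of `ℚ` and `φ : A → B`, `ψ : B → A` satisfy
`ψ ∘ φ = n·1_A` for some nonzero integer `n`, then `A ≅ B`. -/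
theorem rank_one_nearly_iso_implies_iso
    (A B : AddSubgroup ℚ) (hA : A ≠ ⊥) (hB : B ≠ ⊥)
    (φ : A →+ B) (ψ : B →+ A) (n : ℤ) (hn : n ≠ 0)
    (h : ∀ a : A, ψ (φ a) = n • a) :
    Nonempty (A ≃+ B) :=
  rank_one_nearly_iso_implies_iso_general A B hA φ ψ n hn h
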